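/- If G is a unit disk graph with clique number ω, then FCC(G)/Ind(G) ≤ ω + 1. -/

import Mathlib

open Finset

variable {V : Type} [Fintype V] [DecidableEq V]

/-- Fractional vertex cover LP value. -/
noncomputable def FVC (G : SimpleGraph V) : ℝ :=
  sInf {s : ℝ | ∃ x : V → ℝ, (∀ v, 0 ≤ x v ∧ x v ≤ 1) ∧
    (∀ u v, G.Adj u v → 1 ≤ x u + x v) ∧ s = ∑ v, x v}

/-- Fractional matching LP value. -/
noncomputable def FMM (G : SimpleGraph V) [DecidableRel G.Adj] : ℝ :=
  sSup {s : ℝ | ∃ y : Sym2 V → ℝ, (∀ e, 0 ≤ y e ∧ y e ≤ 1) ∧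
    (∀ v : V, ∑ e ∈ G.edgeFinset, (if v ∈ e then y e else 0) ≤ 1) ∧
    s = ∑ e ∈ G.edgeFinset, y e}

/-- Fractional clique packing LP value. -/
noncomputable def FCP (G : SimpleGraph V) : ℝ :=
  sSup {s : ℝ | ∃ x : Finset V → ℝ, (∀ C, 0 ≤ x C ∧ x C ≤ 1) ∧
    (∀ C : Finset V, ¬ G.IsClique (C : Set V) → x C = 0) ∧
    (∀ v : V, ∑ C : Finset V, (if v ∈ C then x C else 0) ≤ 1) ∧
    s = ∑ C : Finset V, x C * ((C.card : ℝ) - 1)}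

/-- Fractional clique cover LP value. -/
noncomputable def FCC (G : SimpleGraph V) : ℝ :=
  sInf {s : ℝ | ∃ y : Finset V → ℝ, (∀ C, 0 ≤ y C ∧ y C ≤ 1) ∧
    (∀ C : Finset V, ¬ G.IsClique (C : Set V) → y C = 0) ∧
    (∀ v : V, 1 ≤ ∑ C : Finset V, (if v ∈ C then y C else 0)) ∧
    s = ∑ C : Finset V, y C}

/-- Maximum independent set size. -/
noncomputable def alphaNum (G : SimpleGraph V) : ℕ :=
  sSup {k : ℕ | ∃ S : Finset V,
    ((S : Set V).Pairwise fun u v => ¬ G.Adj u v) ∧ S.card = k}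

/-- Clique number. -/
noncomputable def cliqueNum (G : SimpleGraph V) : ℕ :=
  sSup {k : ℕ | ∃ C : Finset V, G.IsNClique k C}

/-- Edge-and-small-clique constrained fractional independent set LP value `α_{Fk}`. -/
noncomputable def alphaF (G : SimpleGraph V) (k : ℕ) : ℝ :=
  sSup {s : ℝ | ∃ x : V → ℝ, (∀ v, 0 ≤ x v ∧ x v ≤ 1) ∧
    (∀ C : Finset V, G.IsClique (C : Set V) → C.card ≤ k → ∑ v ∈ C, x v ≤ 1) ∧
    s = ∑ v, x v}

/-- Minimum vertex cover size. -/
noncomputable def VC (G : SimpleGraph V) : ℕ :=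
  sInf {k : ℕ | ∃ S : Finset V,
    (∀ u v, G.Adj u v → u ∈ S ∨ v ∈ S) ∧ S.card = k}

/-- Storage capacity. -/
noncomputable def Cap (G : SimpleGraph V) : ℝ :=
  sSup {x : ℝ | ∃ q : ℕ, 2 ≤ q ∧ ∃ C : Finset (V → Fin q),
    (∀ v : V, ∃ f : ({u : V // G.Adj v u} → Fin q) → Fin q,
      ∀ c ∈ C, f (fun u => c u.1) = c v) ∧
    x = Real.logb q C.card}

/-- Index coding broadcast rate over alphabet of size `q`. -/
noncomputable def IndQ (G : SimpleGraph V) (q : ℕ) : ℕ :=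
  sInf {l : ℕ | ∃ f : (V → Fin q) → (Fin l → Fin q), ∀ v : V,
    ∃ g : (Fin l → Fin q) → ({u : V // G.Adj v u} → Fin q) → Fin q,
      ∀ p : V → Fin q, g (f p) (fun u => p u.1) = p v}

/-- Index coding broadcast rate. -/
noncomputable def Ind (G : SimpleGraph V) : ℝ :=
  sInf {x : ℝ | ∃ q : ℕ, 2 ≤ q ∧ x = IndQ G q}


/-!
Sweep the disk centres from left to right. The leftmost centre `v` has all its neighbours in a
half-disk of radius 2 around it, which three 60° sectors cover; two points of one sector make an
angle of at most π/3 at `v`, so by the law of cosines they are within distance 2, i.e. each sector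
is a clique. Deleting the closed neighbourhood of `v` and recursing produces a clique cover of size
at most `3 #S` for an independent set `S`, whence `FCC ≤ 3 α ≤ 3 Ind`; and `3 ≤ ω + 1` as soon as
`G` has an edge, while an edgeless graph has `FCC ≤ α ≤ Ind`.
-/

open InnerProductGeometry Real

section Geometry

variable {E : Type*} [NormedAddCommGroup E] [InnerProductSpace ℝ E]

lemma norm_sub_le_of_angle_le_pi_div_three {x y : E} {r : ℝ} (hx : ‖x‖ ≤ r) (hy : ‖y‖ ≤ r)
    (hxy : angle x y ≤ π / 3) : ‖x - y‖ ≤ r := by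
  have hcos : 1 / 2 ≤ cos (angle x y) := by
    rw [← cos_pi_div_three]
    exact cos_le_cos_of_nonneg_of_le_pi (angle_nonneg x y) (by linarith [pi_pos]) hxy
  have hx₀ := norm_nonneg x
  have hy₀ := norm_nonneg y
  have hlaw := norm_sub_sq_eq_norm_sq_add_norm_sq_sub_two_mul_norm_mul_norm_mul_cos_angle x y
  -- `‖x‖² + ‖y‖² - ‖x‖‖y‖ ≤ max ‖x‖ ‖y‖ ^ 2`
  have hsq : ‖x - y‖ * ‖x - y‖ ≤ r * r := by
    rcases le_total ‖x‖ ‖y‖ with h | h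
    · nlinarith [mul_nonneg hx₀ hy₀, mul_nonneg hx₀ (sub_nonneg.2 h)]
    · nlinarith [mul_nonneg hx₀ hy₀, mul_nonneg hy₀ (sub_nonneg.2 h)]
  exact (mul_self_le_mul_self_iff (norm_nonneg _) (hx₀.trans hx)).2 hsq

lemma norm_sub_le_of_angle_le_pi_div_six {x y m : E} {r : ℝ} (hx : ‖x‖ ≤ r) (hy : ‖y‖ ≤ r)
    (hxm : angle x m ≤ π / 6) (hym : angle y m ≤ π / 6) : ‖x - y‖ ≤ r :=
  norm_sub_le_of_angle_le_pi_div_three hx hy <| by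
    linarith [angle_le_angle_add_angle x m y, angle_comm y m]

lemma angle_le_pi_div_six_of_le_inner {x y : E} (hx : x ≠ 0) (hy : y ≠ 0)
    (h : √3 / 2 * (‖x‖ * ‖y‖) ≤ inner ℝ x y) : angle x y ≤ π / 6 := by
  have hpos : 0 < ‖x‖ * ‖y‖ := by positivity
  rw [angle, ← arccos_cos (x := π / 6) (by positivity) (by linarith [pi_pos]), cos_pi_div_six]
  exact arccos_le_arccos ((le_div_iff₀ hpos).2 h)

end Geometry

lemma exists_angle_le_pi_div_six {z : EuclideanSpace ℝ (Fin 2)} (hz : z ≠ 0) (h₀ : 0 ≤ z 0) :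
    angle z !₂[2, 0] ≤ π / 6 ∨ angle z !₂[1, √3] ≤ π / 6 ∨ angle z !₂[1, -√3] ≤ π / 6 := by
  have hs : √3 ^ 2 = 3 := sq_sqrt (by norm_num)
  have hs₀ : 0 ≤ √3 := sqrt_nonneg 3
  have hz₀ : 0 ≤ ‖z‖ := norm_nonneg z
  have hz₂ : ‖z‖ ^ 2 = z 0 ^ 2 + z 1 ^ 2 := by
    rw [EuclideanSpace.norm_sq_eq]; simp [Fin.sum_univ_two]
  -- each axis has norm 2, so the criterion reads `√3 ‖z‖ ≤ ⟪z, m⟫`, which we check after squaring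
  have key : ∀ {m : EuclideanSpace ℝ (Fin 2)}, ‖m‖ = 2 → 0 ≤ inner ℝ z m →
      3 * ‖z‖ ^ 2 ≤ inner ℝ z m ^ 2 → angle z m ≤ π / 6 := by
    intro m hm hpos hsq
    refine angle_le_pi_div_six_of_le_inner hz (norm_ne_zero_iff.1 (by simp [hm])) ?_
    rw [hm, ← pow_le_pow_iff_left₀ (by positivity) hpos two_ne_zero]
    nlinarith
  have hn₁ : ‖!₂[(2 : ℝ), 0]‖ = 2 := by rw [EuclideanSpace.norm_eq]; simp [Fin.sum_univ_two]
  have hn₂ : ‖!₂[(1 : ℝ), √3]‖ = 2 := by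
    rw [EuclideanSpace.norm_eq]; simp [Fin.sum_univ_two]; norm_num
  have hn₃ : ‖!₂[(1 : ℝ), -√3]‖ = 2 := by
    rw [EuclideanSpace.norm_eq]; simp [Fin.sum_univ_two]; norm_num
  rcases le_or_gt (3 * z 1 ^ 2) (z 0 ^ 2) with h | h
  · left
    refine key hn₁ ?_ ?_ <;> simp [PiLp.inner_apply, Fin.sum_univ_two] <;> nlinarith
  rcases le_or_gt 0 (z 1) with h₁ | h₁
  · have hle : z 0 ≤ √3 * z 1 := by
      rw [← pow_le_pow_iff_left₀ h₀ (by positivity) two_ne_zero]; nlinarith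
    right; left
    refine key hn₂ ?_ ?_ <;> simp [PiLp.inner_apply, Fin.sum_univ_two] <;> nlinarith
  · have hle : z 0 ≤ √3 * -z 1 := by
      rw [← pow_le_pow_iff_left₀ h₀ (by nlinarith) two_ne_zero]; nlinarith
    right; right
    refine key hn₃ ?_ ?_ <;> simp [PiLp.inner_apply, Fin.sum_univ_two] <;> nlinarith

section IndexCoding

variable {α : Type} {G : SimpleGraph α}

def HasIndexCode (G : SimpleGraph α) (q l : ℕ) : Prop :=
  ∃ f : (α → Fin q) → (Fin l → Fin q), ∀ v : α,
    ∃ g : (Fin l → Fin q) → ({u : α // G.Adj v u} → Fin q) → Fin q,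
      ∀ p : α → Fin q, g (f p) (fun u => p u.1) = p v

lemma hasIndexCode_card [Fintype α] (G : SimpleGraph α) (q : ℕ) :
    HasIndexCode G q (Fintype.card α) :=
  ⟨fun p i => p ((Fintype.equivFin α).symm i),
    fun v => ⟨fun code _ => code (Fintype.equivFin α v), fun p => by simp⟩⟩

-- Assignments supported on an independent set `S` give every receiver in `S` zero side
-- information, so the encoding is injective on these `q ^ #S` assignments.
lemma HasIndexCode.card_le_of_isIndepSet {q l : ℕ} (hq : 2 ≤ q) (h : HasIndexCode G q l)
    {S : Finset α} (hS : G.IsIndepSet (S : Set α)) : #S ≤ l := by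
  classical
  obtain ⟨f, hf⟩ := h
  let extend : (S → Fin q) → α → Fin q :=
    fun σ v => if hv : v ∈ S then σ ⟨v, hv⟩ else ⟨0, by omega⟩
  have hinj : Function.Injective (f ∘ extend) := by
    intro σ σ' hσ
    funext v
    obtain ⟨g, hg⟩ := hf v
    have hside : (fun u : {u // G.Adj v u} => extend σ u) =
        fun u : {u // G.Adj v u} => extend σ' u := by
      funext u
      have hu : u.1 ∉ S := fun hu => hS v.2 hu u.2.ne u.2
      simp only [extend, dif_neg hu]
    have h := hg (extend σ)
    rw [show f (extend σ) = f (extend σ') from hσ, hside, hg] at h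
    simpa [extend] using h.symm
  have hcard := Fintype.card_le_of_injective _ hinj
  simp only [Fintype.card_fun, Fintype.card_coe, Fintype.card_fin] at hcard
  exact (Nat.pow_le_pow_iff_right hq).1 hcard

variable [Fintype α]

lemma SimpleGraph.IsIndepSet.card_le_alphaNum {S : Finset α} (hS : G.IsIndepSet (S : Set α)) :
    #S ≤ alphaNum G :=
  le_csSup ⟨Fintype.card α, fun _ ⟨T, _, hT⟩ => hT ▸ T.card_le_univ⟩ ⟨S, hS, rfl⟩

lemma alphaNum_le_IndQ {q : ℕ} (hq : 2 ≤ q) : alphaNum G ≤ IndQ G q :=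
  csSup_le ⟨0, ∅, by simp, rfl⟩ fun _ ⟨_, hS, hk⟩ => hk ▸
    le_csInf ⟨_, hasIndexCode_card G q⟩ fun _ hl => HasIndexCode.card_le_of_isIndepSet hq hl hS

lemma alphaNum_le_Ind : (alphaNum G : ℝ) ≤ Ind G :=
  le_csInf ⟨_, 2, le_rfl, rfl⟩ fun _ ⟨_, hq, hx⟩ => hx ▸ by exact_mod_cast alphaNum_le_IndQ hq

end IndexCoding

lemma Ind_nonneg {α : Type} (G : SimpleGraph α) : 0 ≤ Ind G :=
  Real.sInf_nonneg fun _ ⟨_, _, hx⟩ => hx ▸ Nat.cast_nonneg _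

lemma two_le_cliqueNum {α : Type} [Fintype α] {G : SimpleGraph α} {u w : α} (h : G.Adj u w) :
    2 ≤ cliqueNum G := by
  classical
  exact le_csSup ⟨Fintype.card α, fun _ ⟨C, hC⟩ => hC.2 ▸ C.card_le_univ⟩
    ⟨{u, w}, by simpa using SimpleGraph.isClique_pair.2 fun _ => h, card_pair h.ne⟩

lemma FCC_le_card {G : SimpleGraph V} (𝒞 : Finset (Finset V))
    (hclique : ∀ C ∈ 𝒞, G.IsClique (C : Set V)) (hcover : ∀ v, ∃ C ∈ 𝒞, v ∈ C) :
    FCC G ≤ #𝒞 := by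
  classical
  refine csInf_le ⟨0, fun _ ⟨y, hy, _, _, hs⟩ => hs ▸ sum_nonneg fun C _ => (hy C).1⟩
    ⟨fun C => if C ∈ 𝒞 then 1 else 0, fun C => by by_cases hC : C ∈ 𝒞 <;> simp [hC],
      fun C hC => if_neg fun h => hC (hclique C h), fun v => ?_, by simp⟩
  obtain ⟨C, hC, hvC⟩ := hcover v
  calc (1 : ℝ) = if v ∈ C then (if C ∈ 𝒞 then 1 else 0) else 0 := by simp [hC, hvC]
    _ ≤ _ := single_le_sum (f := fun C => if v ∈ C then (if C ∈ 𝒞 then (1 : ℝ) else 0) else 0)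
        (fun C _ => by split_ifs <;> norm_num) (mem_univ C)

section GreedyCover

variable {α : Type*} {G : SimpleGraph α}

def LocallyCliqueCoverable (G : SimpleGraph α) (k : ℕ) : Prop :=
  ∀ A : Finset α, A.Nonempty → ∃ v ∈ A, ∃ 𝒞 : Finset (Finset α), #𝒞 ≤ k ∧
    (∀ C ∈ 𝒞, G.IsClique (C : Set α)) ∧ ∀ u ∈ A, (u = v ∨ G.Adj v u) → ∃ C ∈ 𝒞, u ∈ C

lemma LocallyCliqueCoverable.exists_cover {k : ℕ} (h : LocallyCliqueCoverable G k)
    (A : Finset α) :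
    ∃ 𝒞 : Finset (Finset α), ∃ S ⊆ A, (∀ C ∈ 𝒞, G.IsClique (C : Set α)) ∧
      (∀ a ∈ A, ∃ C ∈ 𝒞, a ∈ C) ∧ G.IsIndepSet (S : Set α) ∧ #𝒞 ≤ k * #S := by
  classical
  induction A using Finset.strongInduction with
  | H A ih =>
  rcases A.eq_empty_or_nonempty with rfl | hA
  · exact ⟨∅, ∅, subset_rfl, by simp, by simp, by simp, by simp⟩
  obtain ⟨v, hvA, 𝒞₀, hcard₀, hclique₀, hcover₀⟩ := h A hA
  set A' := A.filter fun u => ¬(u = v ∨ G.Adj v u)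
  have hA' : A' ⊂ A := filter_ssubset.2 ⟨v, hvA, by simp⟩
  obtain ⟨𝒞', S', hS'A', hclique', hcover', hS', hcard'⟩ := ih A' hA'
  have hfar : ∀ u ∈ S', ¬(u = v ∨ G.Adj v u) := fun u hu => (mem_filter.1 (hS'A' hu)).2
  have hvS' : v ∉ S' := fun hv => hfar v hv (Or.inl rfl)
  refine ⟨𝒞₀ ∪ 𝒞', insert v S', insert_subset hvA (hS'A'.trans hA'.subset), ?_, ?_, ?_, ?_⟩
  · simpa [or_imp, forall_and] using ⟨hclique₀, hclique'⟩
  · intro a ha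
    by_cases hav : a = v ∨ G.Adj v a
    · obtain ⟨C, hC, haC⟩ := hcover₀ a ha hav
      exact ⟨C, mem_union_left _ hC, haC⟩
    · obtain ⟨C, hC, haC⟩ := hcover' a (mem_filter.2 ⟨ha, hav⟩)
      exact ⟨C, mem_union_right _ hC, haC⟩
  · rw [coe_insert]
    exact hS'.insert fun u hu _ =>
      ⟨fun hvu => hfar u hu (Or.inr hvu), fun huv => hfar u hu (Or.inr huv.symm)⟩
  · calc #(𝒞₀ ∪ 𝒞') ≤ #𝒞₀ + #𝒞' := card_union_le _ _
      _ ≤ k + k * #S' := add_le_add hcard₀ hcard'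
      _ = k * #(insert v S') := by rw [card_insert_of_notMem hvS']; ring

lemma locallyCliqueCoverable_one (h : ∀ u w, ¬G.Adj u w) : LocallyCliqueCoverable G 1 :=
  fun _ ⟨v, hv⟩ => ⟨v, hv, {{v}}, by simp, by simp, fun u _ hu => ⟨{v}, by simpa [h v u] using hu⟩⟩

end GreedyCover

lemma LocallyCliqueCoverable.FCC_le_mul_Ind {G : SimpleGraph V} {k : ℕ}
    (h : LocallyCliqueCoverable G k) : FCC G ≤ k * Ind G := by
  obtain ⟨𝒞, S, -, hclique, hcover, hS, hcard⟩ := h.exists_cover univ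
  calc FCC G ≤ #𝒞 := FCC_le_card 𝒞 hclique fun v => hcover v (mem_univ v)
    _ ≤ k * #S := by exact_mod_cast hcard
    _ ≤ k * alphaNum G := by gcongr; exact_mod_cast hS.card_le_alphaNum
    _ ≤ k * Ind G := by gcongr; exact alphaNum_le_Ind

section UnitDisk

variable {α : Type*} {G : SimpleGraph α}

lemma adj_of_angle_le_pi_div_six {E : Type*} [NormedAddCommGroup E] [InnerProductSpace ℝ E]
    {c : α → E} {r : ℝ} (hG : ∀ u w, G.Adj u w ↔ u ≠ w ∧ dist (c u) (c w) ≤ r)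
    {u w v : α} {m : E} (huw : u ≠ w) (hu : dist (c u) (c v) ≤ r) (hw : dist (c w) (c v) ≤ r)
    (hum : c u = c v ∨ angle (c u - c v) m ≤ π / 6)
    (hwm : c w = c v ∨ angle (c w - c v) m ≤ π / 6) : G.Adj u w := by
  refine (hG u w).2 ⟨huw, ?_⟩
  rcases hum with hum | hum
  · rwa [hum, dist_comm]
  rcases hwm with hwm | hwm
  · rwa [hwm]
  rw [dist_eq_norm] at hu hw ⊢
  simpa using norm_sub_le_of_angle_le_pi_div_six hu hw hum hwm

lemma locallyCliqueCoverable_three_of_unitDisk (c : α → EuclideanSpace ℝ (Fin 2)) {r : ℝ}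
    (hr : 0 ≤ r) (hG : ∀ u w, G.Adj u w ↔ u ≠ w ∧ dist (c u) (c w) ≤ r) :
    LocallyCliqueCoverable G 3 := by
  classical
  intro A hA
  obtain ⟨v, hvA, hv⟩ := A.exists_min_image (fun u => c u 0) hA
  let sector (m : EuclideanSpace ℝ (Fin 2)) : Finset α := A.filter fun u =>
    dist (c u) (c v) ≤ r ∧ (c u = c v ∨ angle (c u - c v) m ≤ π / 6)
  refine ⟨v, hvA, {sector !₂[2, 0], sector !₂[1, √3], sector !₂[1, -√3]}, card_le_three,
    ?_, fun u hu huv => ?_⟩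
  · simp only [mem_insert, mem_singleton]
    rintro C (rfl | rfl | rfl) u hu w hw huw <;>
      exact adj_of_angle_le_pi_div_six hG huw (mem_filter.1 hu).2.1 (mem_filter.1 hw).2.1
        (mem_filter.1 hu).2.2 (mem_filter.1 hw).2.2
  have hdist : dist (c u) (c v) ≤ r := by
    rcases huv with rfl | huv
    · simpa using hr
    · exact dist_comm (c v) (c u) ▸ ((hG v u).1 huv).2
  by_cases hcu : c u = c v
  · exact ⟨sector !₂[2, 0], by simp, mem_filter.2 ⟨hu, hdist, Or.inl hcu⟩⟩
  have hz₀ : 0 ≤ (c u - c v) 0 := by simpa using hv u hu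
  rcases exists_angle_le_pi_div_six (sub_ne_zero.2 hcu) hz₀ with hm | hm | hm
  · exact ⟨sector !₂[2, 0], by simp, mem_filter.2 ⟨hu, hdist, Or.inr hm⟩⟩
  · exact ⟨sector !₂[1, √3], by simp, mem_filter.2 ⟨hu, hdist, Or.inr hm⟩⟩
  · exact ⟨sector !₂[1, -√3], by simp, mem_filter.2 ⟨hu, hdist, Or.inr hm⟩⟩

end UnitDisk

/-- For a unit disk graph with clique number `ω`, `FCC(G)/Ind(G) ≤ ω + 1`. -/
theorem stmt15 (G : SimpleGraph V)
    (hUDG : ∃ c : V → EuclideanSpace ℝ (Fin 2),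
      ∀ u v, G.Adj u v ↔ u ≠ v ∧ dist (c u) (c v) ≤ 2) :
    FCC G / Ind G ≤ (cliqueNum G : ℝ) + 1 := by
  obtain ⟨c, hG⟩ := hUDG
  have hInd := Ind_nonneg G
  refine div_le_of_le_mul₀ hInd (by positivity) ?_
  by_cases hedge : ∃ u w, G.Adj u w
  · obtain ⟨u, w, huw⟩ := hedge
    have hω : (2 : ℝ) ≤ cliqueNum G := by exact_mod_cast two_le_cliqueNum huw
    have h3 := (locallyCliqueCoverable_three_of_unitDisk c zero_le_two hG).FCC_le_mul_Ind
    push_cast at h3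
    nlinarith
  · push Not at hedge
    have h1 := (locallyCliqueCoverable_one hedge).FCC_le_mul_Ind
    push_cast at h1
    nlinarith [(cliqueNum G).cast_nonneg (α := ℝ)]
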